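/- Let n ≥ 1, let d_1,…,d_n ≥ 1, and let X^{(1)},…,X^{(n)} be real payoff tensors of format d_1×···×d_n. Let π^{(i)} ∈ ℝ^{d_i} (for i = 1,…,n) have all entries positive with Σ_{k=1}^{d_i} π^{(i)}_k = 1, and let P be the rank-one tensor with entries p_{j_1⋯j_n} = π^{(1)}_{j_1}···π^{(n)}_{j_n}. Then every Spohn matrix M_i(P) (i = 1,…,n) has rank at most 1 if and only if π is a totally mixed Nash equilibrium, i.e. for every i ∈ [n] and all k, k' ∈ [d_i] one has Σ_{j : j_i = k} X^{(i)}_j · Π_{l ≠ i} π^{(l)}_{j_l} = Σ_{j : j_i = k'} X^{(i)}_j · Π_{l ≠ i} π^{(l)}_{j_l}, where the sums run over all multi-indices j with the indicated i-th coordinate. -/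

import Mathlib

open Finset Matrix

lemma fiber_sum {n : ℕ} {d : Fin n → ℕ} (i : Fin n) (k : Fin (d i))
    (f : ((l : Fin n) → Fin (d l)) → ℝ) :
    ∑ j ∈ univ.filter (fun j : (l : Fin n) → Fin (d l) => j i = k), f j
      = ∑ g : ((l : {l : Fin n // l ≠ i}) → Fin (d l.1)),
          f ((Equiv.piSplitAt i (fun l => Fin (d l))).symm (k, g)) := by
  classical
  set e := Equiv.piSplitAt i (fun l => Fin (d l)) with he
  have h1 : ∀ (a : Fin (d i)) (g : (l : {l : Fin n // l ≠ i}) → Fin (d l.1)),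
      e.symm (a, g) i = a := by intro a g; simp [he, Equiv.piSplitAt]
  rw [Finset.sum_filter,
    ← Equiv.sum_comp e.symm (fun j => if j i = k then f j else 0),
    Fintype.sum_prod_type, Finset.sum_comm]
  refine Finset.sum_congr rfl fun g _ => ?_
  have h2 : ∀ a, (if e.symm (a, g) i = k then f (e.symm (a, g)) else 0)
      = if a = k then f (e.symm (a, g)) else 0 := fun a => by rw [h1]
  rw [Finset.sum_congr rfl fun a _ => h2 a]
  simp

lemma rank_vecMulVec_le_one {m p : Type*} [Fintype m] [Fintype p]
    (w : m → ℝ) (v : p → ℝ) : (Matrix.vecMulVec w v).rank ≤ 1 := by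
  classical
  rw [Matrix.rank]
  have hle : LinearMap.range (Matrix.vecMulVec w v).mulVecLin
      ≤ Submodule.span ℝ {w} := by
    rintro x ⟨y, rfl⟩
    have : (Matrix.vecMulVec w v).mulVecLin y = (v ⬝ᵥ y) • w := by
      funext kk
      simp only [Matrix.mulVecLin_apply, Matrix.mulVec, Matrix.vecMulVec, dotProduct,
        Matrix.of_apply, Pi.smul_apply, smul_eq_mul, Finset.mul_sum, Finset.sum_mul]
      exact Finset.sum_congr rfl fun c _ => by ring
    rw [this]
    exact Submodule.smul_mem _ _ (Submodule.mem_span_singleton_self w)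
  refine (Submodule.finrank_mono hle).trans ?_
  refine (finrank_span_le_card ({w} : Set (m → ℝ))).trans ?_
  simp

/-- For a rank-one tensor `P` built from positive probability
vectors `π⁽ⁱ⁾`, all Spohn matrices `Mᵢ(P)` have rank at most one if and only if
`π` is a totally mixed Nash equilibrium. -/
theorem spohn_rank_one_iff_nash
    (n : ℕ) (hn : 1 ≤ n) (d : Fin n → ℕ) (hd : ∀ i, 1 ≤ d i)
    (X : Fin n → ((l : Fin n) → Fin (d l)) → ℝ)
    (π : (i : Fin n) → Fin (d i) → ℝ)
    (hpos : ∀ i k, 0 < π i k)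
    (hsum : ∀ i, ∑ k, π i k = 1)
    (P : ((l : Fin n) → Fin (d l)) → ℝ)
    (hP : ∀ j, P j = ∏ l, π l (j l)) :
    (∀ i : Fin n,
      Matrix.rank (Matrix.of fun (k : Fin (d i)) (c : Fin 2) =>
        if c = 0 then
          ∑ j ∈ univ.filter (fun j : (l : Fin n) → Fin (d l) => j i = k), P j
        else
          ∑ j ∈ univ.filter (fun j : (l : Fin n) → Fin (d l) => j i = k),
            X i j * P j) ≤ 1)
    ↔ (∀ (i : Fin n) (k k' : Fin (d i)),
        ∑ j ∈ univ.filter (fun j : (l : Fin n) → Fin (d l) => j i = k),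
          X i j * ∏ l ∈ univ.erase i, π l (j l)
        = ∑ j ∈ univ.filter (fun j : (l : Fin n) → Fin (d l) => j i = k'),
          X i j * ∏ l ∈ univ.erase i, π l (j l)) := by
  classical
  -- local notation
  set E : (i : Fin n) → Fin (d i) → ℝ := fun i k =>
    ∑ j ∈ univ.filter (fun j : (l : Fin n) → Fin (d l) => j i = k),
      X i j * ∏ l ∈ univ.erase i, π l (j l) with hE
  -- the fiber sums of the rank-one tensor
  have hA : ∀ (i : Fin n) (k : Fin (d i)),
      ∑ j ∈ univ.filter (fun j : (l : Fin n) → Fin (d l) => j i = k),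
        ∏ l ∈ univ.erase i, π l (j l) = 1 := by
    intro i k
    set e := Equiv.piSplitAt i (fun l => Fin (d l)) with he
    have h2 : ∀ (a : Fin (d i)) (g : (l : {l : Fin n // l ≠ i}) → Fin (d l.1))
        (l : Fin n) (h : l ≠ i), e.symm (a, g) l = g ⟨l, h⟩ := by
      intro a g l h; simp [he, Equiv.piSplitAt, h]
    rw [fiber_sum i k]
    have hconv : ∀ g : (l : {l : Fin n // l ≠ i}) → Fin (d l.1),
        ∏ l ∈ univ.erase i, π l ((e.symm (k, g)) l)
          = ∏ l : {l : Fin n // l ≠ i}, π l.1 (g l) := by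
      intro g
      rw [Finset.prod_subtype (p := fun l : Fin n => l ≠ i) (univ.erase i)
        (fun x => by simp [Finset.mem_erase]) (fun l => π l ((e.symm (k, g)) l))]
      exact Finset.prod_congr rfl fun l _ => by rw [h2 k g l.1 l.2]
    rw [Finset.sum_congr rfl fun g _ => hconv g, ← Fintype.prod_sum]
    rw [Finset.prod_congr rfl fun l _ => hsum l.1]
    simp
  -- first column
  have hrow0 : ∀ (i : Fin n) (k : Fin (d i)),
      ∑ j ∈ univ.filter (fun j : (l : Fin n) → Fin (d l) => j i = k), P j
        = π i k := by
    intro i k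
    have : ∀ j ∈ univ.filter (fun j : (l : Fin n) → Fin (d l) => j i = k),
        P j = π i k * ∏ l ∈ univ.erase i, π l (j l) := by
      intro j hj
      rw [hP, ← Finset.mul_prod_erase univ _ (mem_univ i),
        (Finset.mem_filter.mp hj).2]
    rw [Finset.sum_congr rfl this, ← Finset.mul_sum, hA i k, mul_one]
  -- second column
  have hrow1 : ∀ (i : Fin n) (k : Fin (d i)),
      ∑ j ∈ univ.filter (fun j : (l : Fin n) → Fin (d l) => j i = k),
        X i j * P j = π i k * E i k := by
    intro i k
    have : ∀ j ∈ univ.filter (fun j : (l : Fin n) → Fin (d l) => j i = k),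
        X i j * P j = π i k * (X i j * ∏ l ∈ univ.erase i, π l (j l)) := by
      intro j hj
      rw [hP, ← Finset.mul_prod_erase univ _ (mem_univ i),
        (Finset.mem_filter.mp hj).2]
      ring
    rw [Finset.sum_congr rfl this, ← Finset.mul_sum, hE]
  constructor
  · -- rank ≤ 1 → Nash
    intro h i k k'
    by_contra hne
    set M : Matrix (Fin (d i)) (Fin 2) ℝ := Matrix.of fun (k : Fin (d i)) (c : Fin 2) =>
        if c = 0 then
          ∑ j ∈ univ.filter (fun j : (l : Fin n) → Fin (d l) => j i = k), P j
        else
          ∑ j ∈ univ.filter (fun j : (l : Fin n) → Fin (d l) => j i = k),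
            X i j * P j with hM
    have hM0 : ∀ q, M q 0 = π i q := fun q => by
      simp only [hM, Matrix.of_apply, if_pos rfl]; exact hrow0 i q
    have hM1 : ∀ q, M q 1 = π i q * E i q := fun q => by
      simp only [hM, Matrix.of_apply]
      rw [if_neg (by decide : (1 : Fin 2) ≠ 0)]; exact hrow1 i q
    set c0 : Fin (d i) → ℝ := fun q => π i q with hc0
    set c1 : Fin (d i) → ℝ := fun q => π i q * E i q with hc1
    have hind : LinearIndependent ℝ ![c0, c1] := by
      rw [LinearIndependent.pair_iff]
      intro s t hst
      have key : ∀ q, s + t * E i q = 0 := by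
        intro q
        have h1 := congrFun hst q
        simp only [Pi.add_apply, Pi.smul_apply, Pi.zero_apply, smul_eq_mul,
          hc0, hc1] at h1
        have h4 : (s + t * E i q) * π i q = 0 := by linear_combination h1
        rcases mul_eq_zero.mp h4 with h5 | h5
        · exact h5
        · exact absurd h5 (hpos i q).ne'
      have hne' : E i k ≠ E i k' := hne
      have h6 : t * (E i k - E i k') = 0 := by linear_combination key k - key k'
      have ht : t = 0 := by
        rcases mul_eq_zero.mp h6 with h7 | h7
        · exact h7
        · exact absurd (sub_eq_zero.mp h7) hne'
      refine ⟨?_, ht⟩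
      have := key k; rw [ht] at this; simpa using this
    have hcols : Submodule.span ℝ (Set.range ![c0, c1])
        ≤ LinearMap.range M.mulVecLin := by
      rw [Submodule.span_le]
      rintro _ ⟨c, rfl⟩
      fin_cases c
      · refine ⟨Pi.single 0 1, ?_⟩
        funext q
        simp [Matrix.mulVecLin_apply, hM0 q, hc0]
      · refine ⟨Pi.single 1 1, ?_⟩
        funext q
        simp [Matrix.mulVecLin_apply, hM1 q, hc1]
    have h2le : 2 ≤ M.rank := by
      rw [Matrix.rank]
      have := Submodule.finrank_mono hcols
      rwa [finrank_span_eq_card hind, Fintype.card_fin] at this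
    have := h i
    rw [← hM] at this
    omega
  · -- Nash → rank ≤ 1
    intro h i
    have k0 : Fin (d i) := ⟨0, hd i⟩
    have heq : (Matrix.of fun (k : Fin (d i)) (c : Fin 2) =>
        if c = 0 then
          ∑ j ∈ univ.filter (fun j : (l : Fin n) → Fin (d l) => j i = k), P j
        else
          ∑ j ∈ univ.filter (fun j : (l : Fin n) → Fin (d l) => j i = k),
            X i j * P j)
        = Matrix.vecMulVec (fun q => π i q) ![(1 : ℝ), E i k0] := by
      ext q c
      fin_cases c
      · simp only [Matrix.of_apply, Matrix.vecMulVec_apply]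
        simp [hrow0 i q]
      · simp only [Matrix.of_apply, Matrix.vecMulVec_apply]
        simp only [show ((⟨1, by norm_num⟩ : Fin 2)) = 1 from rfl]
        rw [if_neg (by decide : (1 : Fin 2) ≠ 0), hrow1 i q,
          show E i q = E i k0 from h i q k0]
        simp
    rw [heq]
    exact rank_vecMulVec_le_one _ _
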